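/- For any connected graph G with at least two vertices and any integer n ≥ 3, the restricted edge-connectivity of the direct product G × T_n satisfies λ′(G × T_n) = min{n·ξ(G) + 2(n−1), n²·λ′(G)} (where the second term is interpreted as +∞ when G admits no restricted edge-cut). -/

import Mathlib

open SimpleGraph

/-- The direct (tensor/Kronecker) product of two simple graphs:
`(u₁, v₁)` and `(u₂, v₂)` are adjacent iff `u₁u₂ ∈ E(G)` and `v₁v₂ ∈ E(H)`. -/
def tensorProd {α β : Type*} (G : SimpleGraph α) (H : SimpleGraph β) :
    SimpleGraph (α × β) where
  Adj x y := G.Adj x.1 y.1 ∧ H.Adj x.2 y.2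
  symm := ⟨fun _ _ h => ⟨h.1.symm, h.2.symm⟩⟩
  loopless := ⟨fun _ h => G.loopless.irrefl _ h.1⟩

/-- The direct product `G × Tₙ` of a simple graph `G` with the total graph `Tₙ`
(the complete graph `Kₙ` with a loop added at every vertex):  since `Tₙ` has all
possible edges and loops, `(u₁, v₁)` is adjacent to `(u₂, v₂)` iff `u₁u₂ ∈ E(G)`. -/
def totalProd {α : Type*} (G : SimpleGraph α) (n : ℕ) :
    SimpleGraph (α × Fin n) where
  Adj x y := G.Adj x.1 y.1
  symm := ⟨fun _ _ (h : G.Adj _ _) => h.symm⟩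
  loopless := ⟨fun _ h => G.loopless.irrefl _ h⟩

/-- The direct product `K₂ × Kₙ`. -/
def K2timesKn (n : ℕ) : SimpleGraph (Fin 2 × Fin n) :=
  tensorProd (completeGraph (Fin 2)) (completeGraph (Fin n))

/-- The direct product `K₂ × Tₙ` (isomorphic to the complete bipartite graph `K_{n,n}`). -/
def K2timesTn (n : ℕ) : SimpleGraph (Fin 2 × Fin n) :=
  totalProd (completeGraph (Fin 2)) n

/-- `[A, V ∖ A]` : the set of edges of `G` with exactly one endpoint in `A`. -/
def cutEdges {α : Type*} (G : SimpleGraph α) (A : Set α) : Set (Sym2 α) :=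
  {e | e ∈ G.edgeSet ∧ ∃ u v, e = s(u, v) ∧ u ∈ A ∧ v ∉ A}

/-- `F` is an edge-cut of `G`: a set of edges whose deletion disconnects `G`. -/
def IsEdgeCut {α : Type*} (G : SimpleGraph α) (F : Set (Sym2 α)) : Prop :=
  F ⊆ G.edgeSet ∧ ¬ (G.deleteEdges F).Connected

/-- The edge-connectivity `λ(G)`: the minimum cardinality of an edge-cut. -/
noncomputable def edgeConn {α : Type*} (G : SimpleGraph α) : ℕ :=
  sInf {k | ∃ F : Finset (Sym2 α), IsEdgeCut G ↑F ∧ F.card = k}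

/-- `G` is super edge-connected (super-λ): every minimum edge-cut is exactly the
set of edges incident with some vertex. -/
def SuperEdgeConnected {α : Type*} (G : SimpleGraph α) : Prop :=
  ∀ F : Finset (Sym2 α), IsEdgeCut G ↑F → F.card = edgeConn G →
    ∃ v, (F : Set (Sym2 α)) = G.incidenceSet v

/-- `F` is a restricted edge-cut of `G`: its deletion disconnects `G` and every
connected component of `G − F` has at least two vertices. -/
def IsRestrictedEdgeCut {α : Type*} (G : SimpleGraph α) (F : Set (Sym2 α)) : Prop :=
  F ⊆ G.edgeSet ∧ ¬ (G.deleteEdges F).Connected ∧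
    ∀ c : (G.deleteEdges F).ConnectedComponent, c.supp.Nontrivial

/-- The restricted edge-connectivity `λ'(G) : ℕ∞`: the minimum cardinality of a
restricted edge-cut, and `+∞` (`⊤`) if no restricted edge-cut exists. -/
noncomputable def restrictedEdgeConn {α : Type*} (G : SimpleGraph α) : ℕ∞ :=
  sInf {k : ℕ∞ | ∃ F : Finset (Sym2 α), IsRestrictedEdgeCut G ↑F ∧ (F.card : ℕ∞) = k}

/-- `G` is super restricted edge-connected (super-λ'): every minimum restricted
edge-cut isolates an edge, i.e. some component of `G − F` is a single edge. -/
def SuperRestrictedEdgeConnected {α : Type*} (G : SimpleGraph α) : Prop :=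
  ∀ F : Finset (Sym2 α), IsRestrictedEdgeCut G ↑F →
    (F.card : ℕ∞) = restrictedEdgeConn G →
    ∃ u v, (G.deleteEdges ↑F).Adj u v ∧
      ((G.deleteEdges ↑F).connectedComponentMk u).supp = {u, v}

/-- The minimum edge-degree `ξ(G) = min { d(u) + d(v) − 2 : uv ∈ E(G) }`. -/
noncomputable def minEdgeDegree {α : Type*} (G : SimpleGraph α) : ℕ :=
  sInf {k | ∃ u v, G.Adj u v ∧ (G.neighborSet u).ncard + (G.neighborSet v).ncard - 2 = k}

/-!
For a side `S` of a restricted edge-cut of `G × Tₙ` let `x u` be the number of vertices of `S` in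
the column `{u} × Tₙ`. Every edge `uv` of `G` carries `x u * (n - x v) + x v * (n - x u)` edges of
the cut `[S, Sᶜ]`. If two adjacent columns are mixed (`0 < x < n`), or a full column has no full
neighbour (or an empty column no empty neighbour), the edges at the two ends of one edge of `G`
already number at least `n ξ(G) + 2 (n - 1)`. Otherwise the mixed columns are independent and all
their neighbours are full or empty; sending each mixed column to the side of the majority of its
neighbours yields a restricted edge-cut `[A, Aᶜ]` of `G` with `n² |[A, Aᶜ]| ≤ |[S, Sᶜ]|`.

The two upper bounds are attained by the cut around an edge `(u, 0)(v, 0)` with `uv` of minimum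
edge-degree, and by the cut `[A × Tₙ, Aᶜ × Tₙ]` for a minimum restricted edge-cut of `G`.
-/

open Finset
open scoped Classical

lemma le_mul_sub_add_mul_sub {n a b : ℕ} (ha : 0 < a) (ha' : a < n) (hb : b ≤ n) :
    n ≤ a * (n - b) + b * (n - a) := by
  zify [hb, ha'.le]
  nlinarith

lemma two_mul_sub_one_le_mul_sub_add_mul_sub {n a b : ℕ} (ha : 0 < a) (ha' : a < n) (hb : 0 < b)
    (hb' : b < n) : 2 * (n - 1) ≤ a * (n - b) + b * (n - a) := by
  have h1 : (a - 1) * (n - b - 1) + (b - 1) * (n - a - 1) + 2 * (n - 1) =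
      a * (n - b) + b * (n - a) := by
    have hb1 : 1 ≤ n - b := by omega
    have ha1 : 1 ≤ n - a := by omega
    zify [hb'.le, ha'.le, ha, hb, ha1, hb1, (by omega : 1 ≤ n)]
    ring
  omega

lemma mul_min_le_mul_sub_add_mul {n a p q : ℕ} (ha : a ≤ n) :
    n * min p q ≤ p * (n - a) + q * a := by
  rcases le_total p q with h | h
  · rw [min_eq_left h]; zify [ha] at h ⊢; nlinarith
  · rw [min_eq_right h]; zify [ha] at h ⊢; nlinarith

lemma card_filter_fst_and_snd {ι κ : Type*} [Fintype ι] [Fintype κ] (p : ι → Prop) (q : κ → Prop)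
    [DecidablePred p] [DecidablePred q] :
    #{ij : ι × κ | p ij.1 ∧ q ij.2} = #{i | p i} * #{j | q j} := by
  rw [← card_product, ← filter_product, univ_product_univ]

namespace SimpleGraph

section RestrictedEdgeCut

variable {α : Type*} {K : SimpleGraph α} {A : Set α}

lemma mk_mem_cutEdges {a b : α} :
    s(a, b) ∈ cutEdges K A ↔ K.Adj a b ∧ (a ∈ A ∧ b ∉ A ∨ b ∈ A ∧ a ∉ A) := by
  simp only [cutEdges, Set.mem_ofPred_eq, mem_edgeSet, Sym2.eq_iff]
  constructor
  · rintro ⟨hab, u, v, (⟨rfl, rfl⟩ | ⟨rfl, rfl⟩), hu, hv⟩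
    exacts [⟨hab, .inl ⟨hu, hv⟩⟩, ⟨hab, .inr ⟨hu, hv⟩⟩]
  · rintro ⟨hab, ⟨ha, hb⟩ | ⟨hb, ha⟩⟩
    exacts [⟨hab, a, b, .inl ⟨rfl, rfl⟩, ha, hb⟩, ⟨hab, b, a, .inr ⟨rfl, rfl⟩, hb, ha⟩]

lemma deleteEdges_cutEdges_adj {a b : α} :
    (K.deleteEdges (cutEdges K A)).Adj a b ↔ K.Adj a b ∧ (a ∈ A ↔ b ∈ A) := by
  rw [deleteEdges_adj, mk_mem_cutEdges]
  tauto

lemma Reachable.mem_iff_of_deleteEdges_cutEdges {a b : α}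
    (h : (K.deleteEdges (cutEdges K A)).Reachable a b) : a ∈ A ↔ b ∈ A := by
  obtain ⟨w⟩ := h
  induction w with
  | nil => rfl
  | cons h _ ih => exact (deleteEdges_cutEdges_adj.1 h).2.trans ih

lemma ConnectedComponent.supp_nontrivial_of_forall_exists_adj {c : K.ConnectedComponent}
    (h : ∀ a, ∃ b, K.Adj a b) : c.supp.Nontrivial := by
  obtain ⟨a, rfl⟩ := c.exists_rep
  obtain ⟨b, hab⟩ := h a
  exact ⟨a, rfl, b, (ConnectedComponent.connectedComponentMk_eq_of_adj hab).symm, hab.ne⟩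

lemma isRestrictedEdgeCut_cutEdges (hA : A.Nonempty) (hAc : Aᶜ.Nonempty)
    (h : ∀ a, ∃ b, K.Adj a b ∧ (a ∈ A ↔ b ∈ A)) :
    IsRestrictedEdgeCut K (cutEdges K A) := by
  refine ⟨fun e he => he.1, fun hc => ?_, fun c => ?_⟩
  · obtain ⟨a, ha⟩ := hA
    obtain ⟨b, hb⟩ := hAc
    exact hb ((hc.preconnected a b).mem_iff_of_deleteEdges_cutEdges.1 ha)
  · refine ConnectedComponent.supp_nontrivial_of_forall_exists_adj fun a => ?_
    obtain ⟨b, hab, hside⟩ := h a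
    exact ⟨b, deleteEdges_cutEdges_adj.2 ⟨hab, hside⟩⟩

lemma exists_adj_of_supp_nontrivial
    (h : ∀ c : K.ConnectedComponent, c.supp.Nontrivial) (a : α) :
    ∃ b, K.Adj a b ∧ K.connectedComponentMk b = K.connectedComponentMk a := by
  obtain ⟨b, hb, hba⟩ := (h (K.connectedComponentMk a)).exists_ne a
  obtain ⟨c, hac⟩ := (ConnectedComponent.exact hb).symm.nonempty_neighborSet_left hba.symm
  exact ⟨c, hac, (ConnectedComponent.connectedComponentMk_eq_of_adj hac).symm⟩

lemma IsRestrictedEdgeCut.exists_cutEdges_subset [Nonempty α] {F : Set (Sym2 α)}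
    (hF : IsRestrictedEdgeCut K F) :
    ∃ A : Set α, A.Nonempty ∧ Aᶜ.Nonempty ∧ (∀ a, ∃ b, K.Adj a b ∧ (a ∈ A ↔ b ∈ A)) ∧
      cutEdges K A ⊆ F := by
  obtain ⟨a, b, hab⟩ : ∃ a b, ¬(K.deleteEdges F).Reachable a b := by
    by_contra! h
    exact hF.2.1 ⟨h⟩
  set c := (K.deleteEdges F).connectedComponentMk a
  refine ⟨c.supp, ⟨a, rfl⟩, ⟨b, fun hb => hab (ConnectedComponent.exact hb).symm⟩,
    fun p => ?_, ?_⟩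
  · obtain ⟨q, hpq, hq⟩ := exists_adj_of_supp_nontrivial hF.2.2 p
    exact ⟨q, hpq.1, by simp only [ConnectedComponent.mem_supp_iff, hq]⟩
  · rintro e ⟨he, p, q, rfl, hp, hq⟩
    by_contra hpq
    exact hq ((ConnectedComponent.connectedComponentMk_eq_of_adj
      (deleteEdges_adj.2 ⟨he, hpq⟩)).symm.trans hp)

lemma restrictedEdgeConn_le_card {F : Finset (Sym2 α)} (hF : IsRestrictedEdgeCut K F) :
    restrictedEdgeConn K ≤ F.card :=
  sInf_le ⟨F, hF, rfl⟩

lemma le_restrictedEdgeConn {c : ℕ∞}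
    (h : ∀ F : Finset (Sym2 α), IsRestrictedEdgeCut K F → c ≤ F.card) :
    c ≤ restrictedEdgeConn K :=
  le_sInf <| by rintro _ ⟨F, hF, rfl⟩; exact h F hF

lemma exists_card_eq_restrictedEdgeConn (h : restrictedEdgeConn K ≠ ⊤) :
    ∃ F : Finset (Sym2 α), IsRestrictedEdgeCut K F ∧ (F.card : ℕ∞) = restrictedEdgeConn K := by
  refine csInf_mem (s := {k : ℕ∞ | ∃ F : Finset (Sym2 α), IsRestrictedEdgeCut K F ∧ F.card = k})
    (Set.nonempty_iff_ne_empty.2 fun hempty => h ?_)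
  rw [restrictedEdgeConn, hempty, sInf_empty]

noncomputable def cutFinset [Finite α] (K : SimpleGraph α) (A : Set α) : Finset (Sym2 α) :=
  (Set.toFinite (cutEdges K A)).toFinset

@[simp]
lemma coe_cutFinset [Finite α] (A : Set α) : (cutFinset K A : Set (Sym2 α)) = cutEdges K A :=
  Set.Finite.coe_toFinset _

lemma mem_cutFinset [Finite α] {A : Set α} {e : Sym2 α} : e ∈ cutFinset K A ↔ e ∈ cutEdges K A :=
  Set.Finite.mem_toFinset _

end RestrictedEdgeCut

variable {V : Type*} {G : SimpleGraph V} {n : ℕ} {x : V → ℕ}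

lemma totalProd_adj {p q : V × Fin n} : (totalProd G n).Adj p q ↔ G.Adj p.1 q.1 := Iff.rfl

noncomputable def colCount (S : Set (V × Fin n)) (u : V) : ℕ := #{i | (u, i) ∈ S}

lemma colCount_le (S : Set (V × Fin n)) (u : V) : colCount S u ≤ n :=
  (card_filter_le _ _).trans_eq (card_fin n)

lemma card_filter_notMem_eq_sub_colCount (S : Set (V × Fin n)) (u : V) :
    #{i | (u, i) ∉ S} = n - colCount S u := by
  have := card_filter_add_card_filter_not (s := univ) (fun i : Fin n => (u, i) ∈ S)
  rw [card_univ, Fintype.card_fin] at this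
  rw [colCount]
  omega

lemma colCount_pos_iff {S : Set (V × Fin n)} {u : V} : 0 < colCount S u ↔ ∃ i, (u, i) ∈ S := by
  simp [colCount, card_pos, Finset.Nonempty]

lemma colCount_lt_iff {S : Set (V × Fin n)} {u : V} : colCount S u < n ↔ ∃ i, (u, i) ∉ S := by
  rw [← Nat.sub_pos_iff_lt, ← card_filter_notMem_eq_sub_colCount]
  simp [card_pos, Finset.Nonempty]

lemma colCount_pair {u v : V} (i : Fin n) :
    colCount ({(u, i), (v, i)} : Set (V × Fin n)) = fun w => if w = u ∨ w = v then 1 else 0 := by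
  funext w
  rw [colCount]
  split_ifs with h
  · rw [card_eq_one]
    exact ⟨i, by ext j; simp only [mem_filter, mem_univ, true_and, Set.mem_insert_iff,
      Set.mem_singleton_iff, Prod.mk.injEq, mem_singleton]; tauto⟩
  · rw [card_eq_zero, eq_empty_iff_forall_notMem]
    simp only [mem_filter, mem_univ, true_and, Set.mem_insert_iff, Set.mem_singleton_iff,
      Prod.mk.injEq]
    tauto

lemma colCount_preimage_fst (A : Set V) :
    colCount (Prod.fst ⁻¹' A : Set (V × Fin n)) = fun u => if u ∈ A then n else 0 := by
  funext u
  by_cases hu : u ∈ A <;> simp [colCount, hu]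

/-- The number of edges of `G × Tₙ` lying over the edge `s(a, b)` of `G` that cross a set `S` of
vertices with `x u = #(S ∩ {u} × Tₙ)`: the `n²` edges `(a, i)(b, j)` over `s(a, b)` cross `S` for
`x a * (n - x b)` choices with `(a, i) ∈ S` and `x b * (n - x a)` choices with `(b, j) ∈ S`. -/
def edgeWeight (n : ℕ) (x : V → ℕ) : Sym2 V → ℕ :=
  Sym2.lift ⟨fun a b => x a * (n - x b) + x b * (n - x a), fun _ _ => add_comm _ _⟩

@[simp]
lemma edgeWeight_mk (n : ℕ) (x : V → ℕ) (a b : V) :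
    edgeWeight n x s(a, b) = x a * (n - x b) + x b * (n - x a) := rfl

lemma edgeWeight_compl (hx : ∀ v, x v ≤ n) :
    edgeWeight n (fun v => n - x v) = edgeWeight n x := by
  funext e
  induction e using Sym2.ind with
  | _ a b =>
    simp only [edgeWeight_mk, Nat.sub_sub_self (hx a), Nat.sub_sub_self (hx b)]
    ring

/-- The properties of the column counts `x u = #(S ∩ {u} × Tₙ)` of a side `S` of a restricted
edge-cut of `G × Tₙ` on which the lower bound rests. -/
structure IsColumnProfile (G : SimpleGraph V) (n : ℕ) (x : V → ℕ) : Prop where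
  le : ∀ v, x v ≤ n
  exists_pos : ∃ v, 0 < x v
  exists_lt : ∃ v, x v < n
  exists_adj_pos : ∀ u, 0 < x u → ∃ v, G.Adj u v ∧ 0 < x v
  exists_adj_lt : ∀ u, x u < n → ∃ v, G.Adj u v ∧ x v < n

lemma IsColumnProfile.compl (hx : IsColumnProfile G n x) :
    IsColumnProfile G n fun v => n - x v where
  le _ := Nat.sub_le _ _
  exists_pos := let ⟨v, hv⟩ := hx.exists_lt; ⟨v, by omega⟩
  exists_lt := let ⟨v, hv⟩ := hx.exists_pos; ⟨v, by have := hx.le v; omega⟩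
  exists_adj_pos u hu := let ⟨v, huv, hv⟩ := hx.exists_adj_lt u (by omega); ⟨v, huv, by omega⟩
  exists_adj_lt u hu :=
    let ⟨v, huv, hv⟩ := hx.exists_adj_pos u (by have := hx.le u; omega)
    ⟨v, huv, by have := hx.le v; omega⟩

lemma isColumnProfile_colCount {S : Set (V × Fin n)} (hS : S.Nonempty) (hSc : Sᶜ.Nonempty)
    (hside : ∀ p, ∃ q, (totalProd G n).Adj p q ∧ (p ∈ S ↔ q ∈ S)) :
    IsColumnProfile G n (colCount S) where
  le := colCount_le S
  exists_pos := let ⟨⟨u, i⟩, h⟩ := hS; ⟨u, colCount_pos_iff.2 ⟨i, h⟩⟩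
  exists_lt := let ⟨⟨u, i⟩, h⟩ := hSc; ⟨u, colCount_lt_iff.2 ⟨i, h⟩⟩
  exists_adj_pos u hu :=
    let ⟨i, hi⟩ := colCount_pos_iff.1 hu
    let ⟨⟨v, j⟩, hadj, hsame⟩ := hside (u, i)
    ⟨v, hadj, colCount_pos_iff.2 ⟨j, hsame.1 hi⟩⟩
  exists_adj_lt u hu :=
    let ⟨i, hi⟩ := colCount_lt_iff.1 hu
    let ⟨⟨v, j⟩, hadj, hsame⟩ := hside (u, i)
    ⟨v, hadj, colCount_lt_iff.2 ⟨j, fun hj => hi (hsame.2 hj)⟩⟩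

variable [Fintype V]

lemma sum_incidenceFinset {M : Type*} [AddCommMonoid M] (f : Sym2 V → M) (u : V) :
    ∑ e ∈ G.incidenceFinset u, f e = ∑ b ∈ G.neighborFinset u, f s(u, b) := by
  symm
  refine Finset.sum_nbij (fun b => s(u, b)) (fun b hb => ?_) (fun b _ c _ h => Sym2.congr_right.1 h)
    (fun e he => ?_) (fun _ _ => rfl)
  · simpa [mk'_mem_incidenceSet_left_iff] using hb
  · obtain ⟨he, hu⟩ := (mem_incidenceFinset _ _ _).1 he
    obtain ⟨b, rfl⟩ := Sym2.mem_iff_exists.1 hu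
    exact ⟨b, by simpa using he, rfl⟩

lemma sum_incidenceFinset_union_of_adj {u v : V} (huv : G.Adj u v) (f : Sym2 V → ℕ) :
    ∑ e ∈ G.incidenceFinset u ∪ G.incidenceFinset v, f e =
      f s(u, v) + ∑ b ∈ (G.neighborFinset u).erase v, f s(u, b) +
        ∑ b ∈ (G.neighborFinset v).erase u, f s(v, b) := by
  have hinter : G.incidenceFinset u ∩ G.incidenceFinset v = {s(u, v)} := by
    rw [← coe_inj]
    push_cast
    exact G.incidenceSet_inter_incidenceSet_of_adj huv
  have := sum_union_inter (s₁ := G.incidenceFinset u) (s₂ := G.incidenceFinset v) (f := f)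
  rw [hinter, sum_singleton, sum_incidenceFinset, sum_incidenceFinset,
    ← add_sum_erase _ _ ((mem_neighborFinset _ _ _).2 huv),
    ← add_sum_erase _ _ ((mem_neighborFinset _ _ _).2 huv.symm), Sym2.eq_swap (a := v)] at this
  omega

lemma add_sum_erase_add_sum_erase_le {u v : V} (huv : G.Adj u v) (f : Sym2 V → ℕ) :
    f s(u, v) + ∑ b ∈ (G.neighborFinset u).erase v, f s(u, b) +
        ∑ b ∈ (G.neighborFinset v).erase u, f s(v, b) ≤ ∑ e ∈ G.edgeFinset, f e := by
  rw [← sum_incidenceFinset_union_of_adj huv]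
  exact sum_le_sum_of_subset <|
    union_subset (incidenceFinset_subset _ _) (incidenceFinset_subset _ _)

lemma sum_edgeFinset_eq_of_isIndepSet {M : Finset V} (hM : G.IsIndepSet M) (f : Sym2 V → ℕ) :
    ∑ e ∈ G.edgeFinset, f e = ∑ u ∈ M, ∑ b ∈ G.neighborFinset u, f s(u, b) +
      ∑ e ∈ G.edgeFinset with ∀ u ∈ M, u ∉ e, f e := by
  have hdisj : (M : Set V).PairwiseDisjoint fun u => G.incidenceFinset u := by
    intro u hu u' hu' huu'
    rw [Function.onFun, ← disjoint_coe, coe_incidenceFinset, coe_incidenceFinset,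
      Set.disjoint_iff_inter_eq_empty]
    exact G.incidenceSet_inter_incidenceSet_of_not_adj (hM hu hu' huu') huu'
  have hcover : {e ∈ G.edgeFinset | ¬∀ u ∈ M, u ∉ e} = M.biUnion fun u => G.incidenceFinset u := by
    ext e
    simp only [mem_filter, mem_edgeFinset, not_forall, not_not, exists_prop, mem_biUnion,
      mem_incidenceFinset, incidenceSet, Set.mem_ofPred_eq]
    tauto
  rw [← sum_filter_not_add_sum_filter _ (fun e => ∀ u ∈ M, u ∉ e), hcover, sum_biUnion hdisj]
  simp only [sum_incidenceFinset]

lemma sum_edgeFinset_le_of_isIndepSet {M : Finset V} (hM : G.IsIndepSet M) {f h : Sym2 V → ℕ}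
    (hout : ∀ e ∈ G.edgeFinset, (∀ u ∈ M, u ∉ e) → f e ≤ h e)
    (hin : ∀ u ∈ M, ∑ b ∈ G.neighborFinset u, f s(u, b) ≤ ∑ b ∈ G.neighborFinset u, h s(u, b)) :
    ∑ e ∈ G.edgeFinset, f e ≤ ∑ e ∈ G.edgeFinset, h e := by
  rw [sum_edgeFinset_eq_of_isIndepSet hM, sum_edgeFinset_eq_of_isIndepSet hM]
  exact add_le_add (sum_le_sum hin) <| sum_le_sum fun e he => (mem_filter.1 he).elim (hout e)

lemma card_cutFinset_eq_sum (A : Set V) :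
    #(cutFinset G A) = ∑ e ∈ G.edgeFinset, if e ∈ cutEdges G A then 1 else 0 := by
  rw [sum_boole, Nat.cast_id]
  congr 1
  ext e
  simp only [mem_cutFinset, mem_filter, mem_edgeFinset]
  exact ⟨fun h => ⟨h.1, h⟩, And.right⟩

lemma filter_cutFinset_totalProd_map_fst (S : Set (V × Fin n)) {u v : V} (huv : G.Adj u v) :
    {c ∈ cutFinset (totalProd G n) S | Sym2.map Prod.fst c = s(u, v)} =
      image (fun ij : Fin n × Fin n => s((u, ij.1), (v, ij.2)))
        {ij | (u, ij.1) ∈ S ∧ (v, ij.2) ∉ S ∨ (u, ij.1) ∉ S ∧ (v, ij.2) ∈ S} := by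
  ext c
  induction c using Sym2.ind with
  | _ p q =>
    obtain ⟨a, i⟩ := p
    obtain ⟨b, j⟩ := q
    simp only [mem_filter, mem_cutFinset, mk_mem_cutEdges, totalProd_adj, Sym2.map_mk,
      mem_image, mem_univ, true_and, Prod.exists, Sym2.eq_iff, Prod.mk.injEq]
    constructor
    · rintro ⟨⟨-, hcut⟩, ⟨rfl, rfl⟩ | ⟨rfl, rfl⟩⟩
      · exact ⟨i, j, by tauto, .inl ⟨⟨rfl, rfl⟩, rfl, rfl⟩⟩
      · exact ⟨j, i, by tauto, .inr ⟨⟨rfl, rfl⟩, rfl, rfl⟩⟩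
    · rintro ⟨i', j', hcut, ⟨⟨rfl, rfl⟩, rfl, rfl⟩ | ⟨⟨rfl, rfl⟩, rfl, rfl⟩⟩
      · exact ⟨⟨huv, by tauto⟩, .inl ⟨rfl, rfl⟩⟩
      · exact ⟨⟨huv.symm, by tauto⟩, .inr ⟨rfl, rfl⟩⟩

lemma card_cutFinset_totalProd (S : Set (V × Fin n)) :
    #(cutFinset (totalProd G n) S) = ∑ e ∈ G.edgeFinset, edgeWeight n (colCount S) e := by
  rw [card_eq_sum_card_fiberwise (f := Sym2.map Prod.fst) (t := G.edgeFinset)]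
  · refine sum_congr rfl fun e he => ?_
    induction e using Sym2.ind with
    | _ u v =>
      have huv : G.Adj u v := mem_edgeFinset.1 he
      rw [filter_cutFinset_totalProd_map_fst S huv, card_image_of_injective, filter_or,
        card_union_of_disjoint, card_filter_fst_and_snd (fun i => (u, i) ∈ S) (fun j => (v, j) ∉ S),
        card_filter_fst_and_snd (fun i => (u, i) ∉ S) (fun j => (v, j) ∈ S),
        card_filter_notMem_eq_sub_colCount, card_filter_notMem_eq_sub_colCount, edgeWeight_mk,
        mul_comm (n - _)]
      · rfl
      · exact disjoint_filter.2 fun _ _ h h' => h'.1 h.1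
      · rintro ⟨i, j⟩ ⟨i', j'⟩ h
        simp only [Sym2.eq_iff, Prod.mk.injEq] at h
        rcases h with ⟨⟨-, rfl⟩, -, rfl⟩ | ⟨⟨h, -⟩, -⟩
        exacts [rfl, absurd h huv.ne]
  · intro c hc
    induction c using Sym2.ind with
    | _ p q => exact mem_edgeFinset.2 (mem_cutFinset.1 hc).1

lemma ncard_neighborSet (u : V) : (G.neighborSet u).ncard = G.degree u := by
  rw [← card_neighborSet_eq_degree, Set.ncard_eq_toFinset_card', Set.toFinset_card]

lemma minEdgeDegree_le {u v : V} (h : G.Adj u v) :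
    minEdgeDegree G ≤ G.degree u + G.degree v - 2 :=
  Nat.sInf_le ⟨u, v, h, by rw [ncard_neighborSet, ncard_neighborSet]⟩

lemma exists_adj_degree_add_degree_sub_two_eq {u v : V} (h : G.Adj u v) :
    ∃ a b, G.Adj a b ∧ G.degree a + G.degree b - 2 = minEdgeDegree G := by
  obtain ⟨a, b, hab, hval⟩ := Nat.sInf_mem (⟨_, u, v, h, rfl⟩ :
    {k | ∃ u v, G.Adj u v ∧ (G.neighborSet u).ncard + (G.neighborSet v).ncard - 2 = k}.Nonempty)
  exact ⟨a, b, hab, by rw [minEdgeDegree, ← hval, ncard_neighborSet, ncard_neighborSet]⟩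

lemma card_erase_neighborFinset {u v : V} (h : G.Adj u v) :
    #((G.neighborFinset u).erase v) = G.degree u - 1 := by
  rw [card_erase_of_mem ((mem_neighborFinset _ _ _).2 h), card_neighborFinset_eq_degree]

lemma mul_minEdgeDegree_add_le_sum_edgeWeight_of_adj (hx : ∀ v, x v ≤ n) {u v : V} (huv : G.Adj u v)
    (hu : 0 < x u) (hu' : x u < n) (hv : 0 < x v) (hv' : x v < n) :
    n * minEdgeDegree G + 2 * (n - 1) ≤ ∑ e ∈ G.edgeFinset, edgeWeight n x e := by
  refine le_trans ?_ (add_sum_erase_add_sum_erase_le huv _)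
  have hu_sum := card_nsmul_le_sum ((G.neighborFinset u).erase v) (fun b => edgeWeight n x s(u, b))
    n fun b _ => le_mul_sub_add_mul_sub hu hu' (hx b)
  have hv_sum := card_nsmul_le_sum ((G.neighborFinset v).erase u) (fun b => edgeWeight n x s(v, b))
    n fun b _ => le_mul_sub_add_mul_sub hv hv' (hx b)
  rw [card_erase_neighborFinset huv, smul_eq_mul] at hu_sum
  rw [card_erase_neighborFinset huv.symm, smul_eq_mul] at hv_sum
  have huv_weight := two_mul_sub_one_le_mul_sub_add_mul_sub hu hu' hv hv'
  have hξ := Nat.mul_le_mul_left n (minEdgeDegree_le huv)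
  have hdeg : n * (G.degree u + G.degree v - 2) = (G.degree u - 1) * n + (G.degree v - 1) * n := by
    have := (G.degree_pos_iff_exists_adj u).2 ⟨v, huv⟩
    have := (G.degree_pos_iff_exists_adj v).2 ⟨u, huv.symm⟩
    rw [← add_mul, mul_comm]
    congr 1
    omega
  simp only [edgeWeight_mk] at *
  omega

lemma mul_minEdgeDegree_add_le_sum_edgeWeight_of_full (hx : ∀ v, x v ≤ n) {u w z : V}
    (huw : G.Adj u w) (huz : G.Adj u z) (hu : 0 < x u) (hu' : x u < n) (hw : x w = n) (hz : x z = 0)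
    (hwN : ∀ b, G.Adj w b → x b < n) :
    n * minEdgeDegree G + 2 * (n - 1) ≤ ∑ e ∈ G.edgeFinset, edgeWeight n x e := by
  -- `uw` and `uz` carry `n (n - x u) + x u n = n²` cut edges, every other edge at `u` or `w` at
  -- least `n`, and `n² - n ≥ 2 (n - 1)`.
  refine le_trans ?_ (add_sum_erase_add_sum_erase_le huw _)
  have hzw : z ∈ (G.neighborFinset u).erase w :=
    mem_erase.2 ⟨fun h => by subst h; omega, (mem_neighborFinset _ _ _).2 huz⟩
  rw [← add_sum_erase _ _ hzw]
  have hu_sum := card_nsmul_le_sum (((G.neighborFinset u).erase w).erase z)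
    (fun b => edgeWeight n x s(u, b)) n fun b _ => le_mul_sub_add_mul_sub hu hu' (hx b)
  have hw_sum := card_nsmul_le_sum ((G.neighborFinset w).erase u) (fun b => edgeWeight n x s(w, b))
    n fun b hb => by
      have := hwN b ((mem_neighborFinset _ _ _).1 (mem_of_mem_erase hb))
      simp only [edgeWeight_mk, hw, Nat.sub_self, mul_zero, add_zero]
      exact Nat.le_mul_of_pos_right n (by omega)
  have hdeg_u := card_pos.2 ⟨z, hzw⟩
  rw [card_erase_of_mem hzw, card_erase_neighborFinset huw, smul_eq_mul] at hu_sum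
  rw [card_erase_neighborFinset huw.symm, smul_eq_mul] at hw_sum
  rw [card_erase_neighborFinset huw] at hdeg_u
  have hdeg_w := (G.degree_pos_iff_exists_adj w).2 ⟨u, huw.symm⟩
  have hξ := Nat.mul_le_mul_left n (minEdgeDegree_le huw)
  have hdeg : n * (G.degree u + G.degree w - 2) =
      (G.degree u - 1 - 1) * n + (G.degree w - 1) * n + 1 * n := by
    rw [mul_comm, ← add_mul, ← add_mul]
    congr 1
    omega
  have hsq : n * (n - x u) + x u * n = n * n := by
    rw [mul_comm (x u), ← mul_add, Nat.sub_add_cancel hu'.le]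
  have hn : 3 * n ≤ n * n + 2 := by nlinarith
  simp only [edgeWeight_mk, hw, hz, Nat.sub_self, Nat.sub_zero, mul_zero, zero_mul, zero_add,
    add_zero] at *
  omega

lemma mul_minEdgeDegree_add_le_sum_edgeWeight_of_forall_lt (hx : IsColumnProfile G n x)
    (hpure : ∀ u v, G.Adj u v → 0 < x u → x u < n → x v = 0 ∨ x v = n) {w : V} (hw : x w = n)
    (hwN : ∀ b, G.Adj w b → x b < n) :
    n * minEdgeDegree G + 2 * (n - 1) ≤ ∑ e ∈ G.edgeFinset, edgeWeight n x e := by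
  obtain ⟨v, hv⟩ := hx.exists_pos
  obtain ⟨u, hwu, hu⟩ := hx.exists_adj_pos w (by have := hx.le v; omega)
  have hu' := hwN u hwu
  obtain ⟨z, huz, hz⟩ := hx.exists_adj_lt u hu'
  exact mul_minEdgeDegree_add_le_sum_edgeWeight_of_full hx.le hwu.symm huz hu hu' hw
    ((hpure u z huz hu hu').resolve_right hz.ne) hwN

noncomputable def roundedSide (G : SimpleGraph V) (n : ℕ) (x : V → ℕ) : Set V :=
  {v | x v = n ∨ 0 < x v ∧ x v < n ∧
    #{b ∈ G.neighborFinset v | x b = 0} ≤ #{b ∈ G.neighborFinset v | x b = n}}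

lemma mem_roundedSide_iff_of_pure {v : V} (h : x v = 0 ∨ x v = n) :
    v ∈ roundedSide G n x ↔ x v = n := by
  simp only [roundedSide, Set.mem_ofPred_eq]
  omega

lemma isRestrictedEdgeCut_roundedSide (hx : IsColumnProfile G n x)
    (hpure : ∀ u v, G.Adj u v → 0 < x u → x u < n → x v = 0 ∨ x v = n)
    (hfull : ∀ w, x w = n → ∃ b, G.Adj w b ∧ x b = n)
    (hempty : ∀ w, x w = 0 → ∃ b, G.Adj w b ∧ x b = 0) :
    IsRestrictedEdgeCut G (cutEdges G (roundedSide G n x)) := by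
  have hmixed_full : ∀ u, 0 < x u → x u < n → ∃ b, G.Adj u b ∧ x b = n := fun u hu hu' =>
    let ⟨b, hub, hb⟩ := hx.exists_adj_pos u hu
    ⟨b, hub, (hpure u b hub hu hu').resolve_left hb.ne'⟩
  have hmixed_empty : ∀ u, 0 < x u → x u < n → ∃ b, G.Adj u b ∧ x b = 0 := fun u hu hu' =>
    let ⟨b, hub, hb⟩ := hx.exists_adj_lt u hu'
    ⟨b, hub, (hpure u b hub hu hu').resolve_right hb.ne⟩
  have hn : 0 < n := let ⟨v, hv⟩ := hx.exists_pos; hv.trans_le (hx.le v)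
  have hempty_mem : ∀ b, x b = 0 → b ∉ roundedSide G n x := fun b hb => by
    rw [mem_roundedSide_iff_of_pure (.inl hb)]
    omega
  refine isRestrictedEdgeCut_cutEdges ?_ ?_ fun v => ?_
  · obtain ⟨v, hv⟩ := hx.exists_pos
    by_cases hvn : x v = n
    · exact ⟨v, .inl hvn⟩
    · obtain ⟨b, -, hb⟩ := hmixed_full v hv (lt_of_le_of_ne (hx.le v) hvn)
      exact ⟨b, .inl hb⟩
  · obtain ⟨v, hv⟩ := hx.exists_lt
    by_cases hv0 : x v = 0
    · exact ⟨v, hempty_mem v hv0⟩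
    · obtain ⟨b, -, hb⟩ := hmixed_empty v (Nat.pos_of_ne_zero hv0) hv
      exact ⟨b, hempty_mem b hb⟩
  · by_cases hv : 0 < x v ∧ x v < n
    · by_cases hvA : v ∈ roundedSide G n x
      · obtain ⟨b, hvb, hb⟩ := hmixed_full v hv.1 hv.2
        exact ⟨b, hvb, iff_of_true hvA (.inl hb)⟩
      · obtain ⟨b, hvb, hb⟩ := hmixed_empty v hv.1 hv.2
        exact ⟨b, hvb, iff_of_false hvA (hempty_mem b hb)⟩
    · rcases (by have := hx.le v; omega : x v = 0 ∨ x v = n) with hv0 | hvn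
      · obtain ⟨b, hvb, hb⟩ := hempty v hv0
        exact ⟨b, hvb, iff_of_false (hempty_mem v hv0) (hempty_mem b hb)⟩
      · obtain ⟨b, hvb, hb⟩ := hfull v hvn
        exact ⟨b, hvb, iff_of_true (.inl hvn) (.inl hb)⟩

lemma sum_edgeWeight_neighborFinset_of_pure {u : V} (hu : x u < n)
    (hN : ∀ b ∈ G.neighborFinset u, x b = 0 ∨ x b = n) :
    ∑ b ∈ G.neighborFinset u, edgeWeight n x s(u, b) =
      #{b ∈ G.neighborFinset u | x b = n} * (n * (n - x u)) +
        #{b ∈ G.neighborFinset u | x b = 0} * (x u * n) := by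
  have hempty : {b ∈ G.neighborFinset u | ¬x b = n} = {b ∈ G.neighborFinset u | x b = 0} :=
    filter_congr fun b hb => by have := hN b hb; omega
  have hfull_weight : ∀ b ∈ {b ∈ G.neighborFinset u | x b = n},
      edgeWeight n x s(u, b) = n * (n - x u) := fun b hb => by
    simp [(mem_filter.1 hb).2]
  have hempty_weight : ∀ b ∈ {b ∈ G.neighborFinset u | x b = 0},
      edgeWeight n x s(u, b) = x u * n := fun b hb => by
    simp [(mem_filter.1 hb).2]
  rw [← sum_filter_add_sum_filter_not _ (fun b => x b = n), hempty, sum_congr rfl hfull_weight,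
    sum_congr rfl hempty_weight, sum_const, sum_const, smul_eq_mul, smul_eq_mul]

lemma sum_cut_neighborFinset_roundedSide_le (hx : ∀ v, x v ≤ n) {u : V} (hu : 0 < x u)
    (hu' : x u < n) (hN : ∀ b, G.Adj u b → x b = 0 ∨ x b = n) :
    ∑ b ∈ G.neighborFinset u, n ^ 2 * (if s(u, b) ∈ cutEdges G (roundedSide G n x) then 1 else 0)
      ≤ ∑ b ∈ G.neighborFinset u, edgeWeight n x s(u, b) := by
  set P := #{b ∈ G.neighborFinset u | x b = n}
  set Q := #{b ∈ G.neighborFinset u | x b = 0}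
  have hN' : ∀ b ∈ G.neighborFinset u, x b = 0 ∨ x b = n := fun b hb =>
    hN b ((mem_neighborFinset _ _ _).1 hb)
  have hcut : #{b ∈ G.neighborFinset u | s(u, b) ∈ cutEdges G (roundedSide G n x)} = min P Q := by
    by_cases huA : u ∈ roundedSide G n x
    · have hQP : Q ≤ P := by
        simp only [roundedSide, Set.mem_ofPred_eq] at huA
        omega
      rw [min_eq_right hQP]
      refine congrArg card (filter_congr fun b hb => ?_)
      rw [mk_mem_cutEdges, mem_roundedSide_iff_of_pure (hN' b hb)]
      have := hN' b hb
      simp only [(mem_neighborFinset _ _ _).1 hb, huA, true_and, not_true_eq_false, and_false,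
        or_false]
      omega
    · have hPQ : P ≤ Q := by
        simp only [roundedSide, Set.mem_ofPred_eq] at huA
        omega
      rw [min_eq_left hPQ]
      refine congrArg card (filter_congr fun b hb => ?_)
      rw [mk_mem_cutEdges, mem_roundedSide_iff_of_pure (hN' b hb)]
      simp [(mem_neighborFinset _ _ _).1 hb, huA]
  rw [← mul_sum, sum_boole, Nat.cast_id, hcut, sum_edgeWeight_neighborFinset_of_pure hu' hN']
  calc n ^ 2 * min P Q = n * (n * min P Q) := by ring
    _ ≤ n * (P * (n - x u) + Q * x u) := Nat.mul_le_mul_left n (mul_min_le_mul_sub_add_mul (hx u))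
    _ = P * (n * (n - x u)) + Q * (x u * n) := by ring

lemma sq_mul_card_cutFinset_roundedSide_le (hx : ∀ v, x v ≤ n)
    (hpure : ∀ u v, G.Adj u v → 0 < x u → x u < n → x v = 0 ∨ x v = n) :
    n ^ 2 * #(cutFinset G (roundedSide G n x)) ≤ ∑ e ∈ G.edgeFinset, edgeWeight n x e := by
  rw [card_cutFinset_eq_sum, mul_sum]
  refine sum_edgeFinset_le_of_isIndepSet (M := {v | 0 < x v ∧ x v < n}) ?_ ?_ fun u hu => ?_
  · intro u hu v hv _ huv
    rw [mem_coe, mem_filter] at hu hv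
    have := hpure u v huv hu.2.1 hu.2.2
    omega
  · intro e he hM
    induction e using Sym2.ind with
    | _ a b =>
      have hpure_of : ∀ c ∈ s(a, b), x c = 0 ∨ x c = n := fun c hc => by
        have hmixed : ¬(0 < x c ∧ x c < n) := fun h => hM c (by simpa using h) hc
        have := hx c
        omega
      split_ifs with hcut
      · rw [mk_mem_cutEdges, mem_roundedSide_iff_of_pure (hpure_of a (Sym2.mem_mk_left a b)),
          mem_roundedSide_iff_of_pure (hpure_of b (Sym2.mem_mk_right a b))] at hcut
        have := hpure_of a (Sym2.mem_mk_left a b)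
        have := hpure_of b (Sym2.mem_mk_right a b)
        rcases hcut.2 with ⟨ha, hb⟩ | ⟨hb, ha⟩
        · rw [edgeWeight_mk, ha, show x b = 0 by omega]
          simp [sq]
        · rw [edgeWeight_mk, hb, show x a = 0 by omega]
          simp [sq]
      · simp
  · simp only [mem_filter, mem_univ, true_and] at hu
    exact sum_cut_neighborFinset_roundedSide_le hx hu.1 hu.2 fun b hb => hpure u b hb hu.1 hu.2

theorem min_le_sum_edgeWeight (hx : IsColumnProfile G n x) :
    min ((n * minEdgeDegree G + 2 * (n - 1) : ℕ) : ℕ∞) ((n ^ 2 : ℕ) * restrictedEdgeConn G) ≤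
      (∑ e ∈ G.edgeFinset, edgeWeight n x e : ℕ) := by
  by_cases hadj : ∃ u v, G.Adj u v ∧ 0 < x u ∧ x u < n ∧ 0 < x v ∧ x v < n
  · obtain ⟨u, v, huv, hu, hu', hv, hv'⟩ := hadj
    exact min_le_left _ _ |>.trans <| by
      exact_mod_cast mul_minEdgeDegree_add_le_sum_edgeWeight_of_adj hx.le huv hu hu' hv hv'
  have hpure : ∀ u v, G.Adj u v → 0 < x u → x u < n → x v = 0 ∨ x v = n := by
    push Not at hadj
    intro u v huv hu hu'
    have := hadj u v huv hu hu'
    have := hx.le v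
    omega
  by_cases hfull : ∃ w, x w = n ∧ ∀ b, G.Adj w b → x b < n
  · obtain ⟨w, hw, hwN⟩ := hfull
    exact min_le_left _ _ |>.trans <| by
      exact_mod_cast mul_minEdgeDegree_add_le_sum_edgeWeight_of_forall_lt hx hpure hw hwN
  by_cases hempty : ∃ w, x w = 0 ∧ ∀ b, G.Adj w b → 0 < x b
  · obtain ⟨w, hw, hwN⟩ := hempty
    have hpure' : ∀ u v, G.Adj u v → 0 < n - x u → n - x u < n → n - x v = 0 ∨ n - x v = n :=
      fun u v huv hu hu' => by have := hpure u v huv (by omega) (by omega); omega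
    rw [← edgeWeight_compl hx.le]
    exact min_le_left _ _ |>.trans <| by
      exact_mod_cast mul_minEdgeDegree_add_le_sum_edgeWeight_of_forall_lt hx.compl hpure'
        (show n - x w = n by omega) fun b hb => show n - x b < n by
          have := hwN b hb
          have := hx.le b
          omega
  push Not at hfull hempty
  have hcut := isRestrictedEdgeCut_roundedSide hx hpure
    (fun w hw => let ⟨b, hwb, hb⟩ := hfull w hw; ⟨b, hwb, le_antisymm (hx.le b) hb⟩)
    (fun w hw => let ⟨b, hwb, hb⟩ := hempty w hw; ⟨b, hwb, Nat.le_zero.1 hb⟩)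
  rw [← coe_cutFinset] at hcut
  calc min _ _ ≤ ((n ^ 2 : ℕ) : ℕ∞) * restrictedEdgeConn G := min_le_right _ _
    _ ≤ ((n ^ 2 : ℕ) : ℕ∞) * #(cutFinset G (roundedSide G n x)) := by
      gcongr
      exact restrictedEdgeConn_le_card hcut
    _ ≤ _ := by exact_mod_cast sq_mul_card_cutFinset_roundedSide_le hx.le hpure

lemma sum_edgeWeight_indicator_pair {u v : V} (huv : G.Adj u v) :
    ∑ e ∈ G.edgeFinset, edgeWeight n (fun w => if w = u ∨ w = v then 1 else 0) e =
      n * (G.degree u + G.degree v - 2) + 2 * (n - 1) := by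
  set x : V → ℕ := fun w => if w = u ∨ w = v then 1 else 0
  have hzero : ∀ e ∈ G.edgeFinset, e ∉ G.incidenceFinset u ∪ G.incidenceFinset v →
      edgeWeight n x e = 0 := by
    intro e he hnot
    induction e using Sym2.ind with
    | _ a b =>
      simp only [mem_union, mem_incidenceFinset, mk'_mem_incidenceSet_iff, not_and, not_or] at hnot
      have hab : G.Adj a b := mem_edgeFinset.1 he
      obtain ⟨⟨hua, hub⟩, hva, hvb⟩ := And.intro (hnot.1 hab) (hnot.2 hab)
      simp [x, Ne.symm hua, Ne.symm hub, Ne.symm hva, Ne.symm hvb]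
  have hnbr : ∀ {a c : V}, G.Adj a c → ∀ b ∈ (G.neighborFinset a).erase c,
      (a = u ∧ c = v ∨ a = v ∧ c = u) → edgeWeight n x s(a, b) = n := by
    rintro a c hac b hb hac'
    obtain ⟨hbc, hab⟩ := mem_erase.1 hb
    have hab := (mem_neighborFinset _ _ _).1 hab
    have hba : b ≠ a := hab.ne'
    simp only [x, edgeWeight_mk]
    rcases hac' with ⟨rfl, rfl⟩ | ⟨rfl, rfl⟩ <;> simp [hbc, hba]
  rw [← sum_subset (union_subset (incidenceFinset_subset _ _) (incidenceFinset_subset _ _)) hzero,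
    sum_incidenceFinset_union_of_adj huv,
    sum_congr rfl fun b hb => hnbr huv b hb (.inl ⟨rfl, rfl⟩),
    sum_congr rfl fun b hb => hnbr huv.symm b hb (.inr ⟨rfl, rfl⟩),
    sum_const, sum_const, card_erase_neighborFinset huv, card_erase_neighborFinset huv.symm]
  have := (G.degree_pos_iff_exists_adj u).2 ⟨v, huv⟩
  have := (G.degree_pos_iff_exists_adj v).2 ⟨u, huv.symm⟩
  simp only [x, edgeWeight_mk, smul_eq_mul, true_or, or_true, if_true, one_mul]
  rw [mul_comm n, show G.degree u + G.degree v - 2 = (G.degree u - 1) + (G.degree v - 1) by omega,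
    add_mul]
  omega

lemma sum_edgeWeight_indicator (A : Set V) :
    ∑ e ∈ G.edgeFinset, edgeWeight n (fun u => if u ∈ A then n else 0) e =
      n ^ 2 * #(cutFinset G A) := by
  rw [card_cutFinset_eq_sum, mul_sum]
  refine sum_congr rfl fun e he => ?_
  induction e using Sym2.ind with
  | _ a b =>
    have hab : G.Adj a b := mem_edgeFinset.1 he
    by_cases ha : a ∈ A <;> by_cases hb : b ∈ A <;> simp [mk_mem_cutEdges, ha, hb, hab, sq]

theorem min_le_restrictedEdgeConn_totalProd [Nonempty (V × Fin n)] :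
    min ((n * minEdgeDegree G + 2 * (n - 1) : ℕ) : ℕ∞) ((n ^ 2 : ℕ) * restrictedEdgeConn G) ≤
      restrictedEdgeConn (totalProd G n) := by
  refine le_restrictedEdgeConn fun F hF => ?_
  obtain ⟨S, hS, hSc, hside, hsub⟩ := hF.exists_cutEdges_subset
  calc min _ _ ≤ ((∑ e ∈ G.edgeFinset, edgeWeight n (colCount S) e : ℕ) : ℕ∞) :=
        min_le_sum_edgeWeight (isColumnProfile_colCount hS hSc hside)
    _ = #(cutFinset (totalProd G n) S) := by rw [card_cutFinset_totalProd]
    _ ≤ #F := by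
      gcongr
      rw [← coe_subset, coe_cutFinset]
      exact hsub

theorem restrictedEdgeConn_totalProd_le_minEdgeDegree [Nonempty V] (hn : 2 ≤ n)
    (hG : ∀ u, ∃ v, G.Adj u v) :
    restrictedEdgeConn (totalProd G n) ≤ ((n * minEdgeDegree G + 2 * (n - 1) : ℕ) : ℕ∞) := by
  obtain ⟨u, v, huv, hξ⟩ :=
    exists_adj_degree_add_degree_sub_two_eq (hG (Classical.arbitrary V)).choose_spec
  let i₀ : Fin n := ⟨0, by omega⟩
  let i₁ : Fin n := ⟨1, by omega⟩
  set S : Set (V × Fin n) := {(u, i₀), (v, i₀)}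
  have hi : i₁ ≠ i₀ := by simp [i₀, i₁, Fin.ext_iff]
  have hS₁ : ∀ w, (w, i₁) ∉ S := by simp [S, hi]
  have hcut : IsRestrictedEdgeCut (totalProd G n) (cutEdges (totalProd G n) S) := by
    refine isRestrictedEdgeCut_cutEdges ⟨(u, i₀), .inl rfl⟩ ⟨(u, i₁), hS₁ u⟩ fun ⟨w, i⟩ => ?_
    by_cases hwi : (w, i) ∈ S
    · rcases hwi with h | h <;> rw [h]
      · exact ⟨(v, i₀), huv, iff_of_true (.inl rfl) (.inr rfl)⟩
      · exact ⟨(u, i₀), huv.symm, iff_of_true (.inr rfl) (.inl rfl)⟩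
    · obtain ⟨b, hwb⟩ := hG w
      exact ⟨(b, i₁), hwb, iff_of_false hwi (hS₁ b)⟩
  rw [← coe_cutFinset] at hcut
  refine (restrictedEdgeConn_le_card hcut).trans_eq ?_
  rw [card_cutFinset_totalProd, colCount_pair, sum_edgeWeight_indicator_pair huv, hξ]

theorem restrictedEdgeConn_totalProd_le_mul [Nonempty V] (hn : 0 < n) :
    restrictedEdgeConn (totalProd G n) ≤ ((n ^ 2 : ℕ) : ℕ∞) * restrictedEdgeConn G := by
  by_cases htop : restrictedEdgeConn G = ⊤
  · rw [htop, ENat.mul_top (by positivity)]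
    exact le_top
  obtain ⟨F, hF, hcard⟩ := exists_card_eq_restrictedEdgeConn htop
  obtain ⟨A, ⟨a, ha⟩, ⟨b, hb⟩, hside, hsub⟩ := hF.exists_cutEdges_subset
  let i₀ : Fin n := ⟨0, hn⟩
  have hcut : IsRestrictedEdgeCut (totalProd G n) (cutEdges (totalProd G n) (Prod.fst ⁻¹' A)) :=
    isRestrictedEdgeCut_cutEdges ⟨(a, i₀), ha⟩ ⟨(b, i₀), hb⟩ fun ⟨w, i⟩ =>
      let ⟨c, hwc, hsame⟩ := hside w
      ⟨(c, i), hwc, hsame⟩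
  rw [← coe_cutFinset] at hcut
  calc restrictedEdgeConn (totalProd G n) ≤ #(cutFinset (totalProd G n) (Prod.fst ⁻¹' A)) :=
        restrictedEdgeConn_le_card hcut
    _ = ((n ^ 2 * #(cutFinset G A) : ℕ) : ℕ∞) := by
      rw [card_cutFinset_totalProd, colCount_preimage_fst, sum_edgeWeight_indicator]
    _ ≤ ((n ^ 2 : ℕ) : ℕ∞) * restrictedEdgeConn G := by
      rw [← hcard, Nat.cast_mul]
      gcongr
      rw [← coe_subset, coe_cutFinset]
      exact hsub

end SimpleGraph

theorem stmt13 {V : Type*} [Fintype V] (G : SimpleGraph V) (hG : G.Connected)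
    (hV : 2 ≤ Fintype.card V) (n : ℕ) (hn : 3 ≤ n) :
    restrictedEdgeConn (totalProd G n) =
      min ((n * minEdgeDegree G + 2 * (n - 1) : ℕ) : ℕ∞)
        (((n ^ 2 : ℕ) : ℕ∞) * restrictedEdgeConn G) := by
  have : Nonempty V := hG.nonempty
  have : Nontrivial V := Fintype.one_lt_card_iff_nontrivial.1 hV
  have : Nonempty (V × Fin n) := ⟨(Classical.arbitrary V, ⟨0, by omega⟩)⟩
  refine le_antisymm (le_min ?_ ?_) min_le_restrictedEdgeConn_totalProd
  · exact restrictedEdgeConn_totalProd_le_minEdgeDegree (by omega)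
      hG.preconnected.exists_adj_of_nontrivial
  · exact restrictedEdgeConn_totalProd_le_mul (by omega)
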